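/- Let n, p, q be natural numbers with n ≥ 2p+1 and n ≥ 2q+1, and let L ∈ ℂ^{(2p+1)×(2q+1)} be a single-channel complex 2D convolution filter with Jacobian J(L) on n×n inputs (defined explicitly in the context). Then J(L) is skew-Hermitian (J(L)^H = -J(L)) if and only if L_{k,l} = -conj(L_{2p-k,2q-l}) for all indices 0 ≤ k ≤ 2p, 0 ≤ l ≤ 2q. -/

import Mathlib

open Matrix

open scoped Kronecker ComplexConjugate

/-- The shift matrix `P^(k)`: the `n × n` matrix with `P^(k)_{i,j} = 1` if `i - j = k`
(as integers) and `0` otherwise. -/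
noncomputable def shiftP (n : ℕ) (k : ℤ) : Matrix (Fin n) (Fin n) ℂ :=
  Matrix.of fun i j => if ((i : ℕ) : ℤ) - ((j : ℕ) : ℤ) = k then 1 else 0

/-- The Jacobian of the 2D convolution (zero padding, stride 1) with a single-channel complex
filter `L ∈ ℂ^{(2p+1)×(2q+1)}` on `n×n` inputs:
`J(L) = Σ_{i=-p}^{p} Σ_{j=-q}^{q} L_{p+i,q+j} • (P^(i) ⊗ P^(j))`. -/
noncomputable def convJacobian (n p q : ℕ) (L : Fin (2 * p + 1) → Fin (2 * q + 1) → ℂ) :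
    Matrix (Fin n × Fin n) (Fin n × Fin n) ℂ :=
  ∑ k : Fin (2 * p + 1), ∑ l : Fin (2 * q + 1),
    L k l • (shiftP n (((k : ℕ) : ℤ) - (p : ℤ)) ⊗ₖ shiftP n (((l : ℕ) : ℤ) - (q : ℤ)))

/-!
Since `(P^(i))ᴴ = P^(-i)`, the conjugate transpose of `J(L)` is again a convolution Jacobian,
namely `J(L')` for the flipped conjugate filter `L'_{k,l} = conj L_{2p-k,2q-l}`. When
`n ≥ 2p+1` and `n ≥ 2q+1`, every tap `L_{k,l}` is the entry of `J(L)` in row `(k,l)` and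
column `(p,q)`, so `L ↦ J(L)` is injective and `J(L)ᴴ = -J(L) = J(-L)` holds iff `L' = -L`.
-/

section

variable {n p q : ℕ}

theorem shiftP_conjTranspose (k : ℤ) : (shiftP n k)ᴴ = shiftP n (-k) := by
  ext i j
  simp only [shiftP, conjTranspose_apply, of_apply]
  split_ifs <;> simp <;> omega

theorem convJacobian_conjTranspose (L : Fin (2 * p + 1) → Fin (2 * q + 1) → ℂ) :
    (convJacobian n p q L)ᴴ = convJacobian n p q fun k l => conj (L k.rev l.rev) := by
  simp only [convJacobian, conjTranspose_sum, conjTranspose_smul, conjTranspose_kronecker,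
    shiftP_conjTranspose]
  refine Fintype.sum_equiv Fin.revPerm _ _ fun k => ?_
  refine Fintype.sum_equiv Fin.revPerm _ _ fun l => ?_
  have := k.isLt
  have := l.isLt
  simp only [Fin.revPerm_apply, Fin.rev_rev, Fin.val_rev, Complex.star_def]
  congr 3 <;> omega

theorem convJacobian_neg (L : Fin (2 * p + 1) → Fin (2 * q + 1) → ℂ) :
    convJacobian n p q (-L) = -convJacobian n p q L := by
  simp [convJacobian, neg_smul]

theorem convJacobian_apply_center (hp : 2 * p + 1 ≤ n) (hq : 2 * q + 1 ≤ n)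
    (L : Fin (2 * p + 1) → Fin (2 * q + 1) → ℂ) (k : Fin (2 * p + 1)) (l : Fin (2 * q + 1)) :
    convJacobian n p q L (Fin.castLE hp k, Fin.castLE hq l) (⟨p, by omega⟩, ⟨q, by omega⟩) =
      L k l := by
  simp [convJacobian, Matrix.sum_apply, kroneckerMap_apply, shiftP, Fin.val_inj]

theorem convJacobian_injective (hp : 2 * p + 1 ≤ n) (hq : 2 * q + 1 ≤ n) :
    Function.Injective (convJacobian n p q) := fun L L' h => by
  ext k l
  rw [← convJacobian_apply_center hp hq L, h, convJacobian_apply_center]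

end

/-- If `n ≥ 2p+1` and `n ≥ 2q+1`, the Jacobian of the convolution with a single-channel complex
filter `L` is skew-Hermitian if and only if `L_{k,l} = -conj (L_{2p-k,2q-l})` for all indices. -/
theorem convJacobian_skewHermitian_iff (n p q : ℕ)
    (hp : 2 * p + 1 ≤ n) (hq : 2 * q + 1 ≤ n)
    (L : Fin (2 * p + 1) → Fin (2 * q + 1) → ℂ) :
    (convJacobian n p q L)ᴴ = -(convJacobian n p q L) ↔
      ∀ (k : Fin (2 * p + 1)) (l : Fin (2 * q + 1)), L k l = -conj (L k.rev l.rev) := by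
  rw [convJacobian_conjTranspose, ← convJacobian_neg, (convJacobian_injective hp hq).eq_iff]
  simp only [funext_iff, Pi.neg_apply]
  exact forall₂_congr fun k l => by rw [eq_comm, neg_eq_iff_eq_neg]
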